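/- Let G be a k-regular undirected connected graph with k ≥ 3 and let U = U(G) be the Grover transfer matrix. For arcs a, b ∈ A(G): (U²)_{ab} > 0 if and only if either a = b, or (t(b) is adjacent to o(a) in G, a ≠ b, o(a) ≠ o(b), and t(a) ≠ t(b)); and (U²)_{ab} < 0 if and only if a ≠ b and (o(a) = o(b) or t(a) = t(b)). -/

import Mathlib

open Matrix Polynomial

noncomputable section

variable {V : Type} [Fintype V] [DecidableEq V]

/-- The set of symmetric arcs of a simple graph `G`: ordered pairs of adjacent vertices. -/
abbrev GArc (G : SimpleGraph V) : Type := {p : V × V // G.Adj p.1 p.2}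

/-- The origin of an arc. -/
def arcO {G : SimpleGraph V} (a : GArc G) : V := a.1.1

/-- The terminus of an arc. -/
def arcT {G : SimpleGraph V} (a : GArc G) : V := a.1.2

/-- The inverse of an arc. -/
def arcInv {G : SimpleGraph V} (a : GArc G) : GArc G := ⟨(a.1.2, a.1.1), a.2.symm⟩

/-- The boundary matrix `K`, with `K_{v,a} = δ_{v,t(a)} / √(deg t(a))`. -/
def bdK (G : SimpleGraph V) [DecidableRel G.Adj] : Matrix V (GArc G) ℂ :=
  fun v a => if v = arcT a then ((1 / Real.sqrt (G.degree (arcT a)) : ℝ) : ℂ) else 0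

/-- The coin operator `C = 2K*K - I`. -/
def coinC (G : SimpleGraph V) [DecidableRel G.Adj] : Matrix (GArc G) (GArc G) ℂ :=
  (2 : ℂ) • ((bdK G)ᴴ * bdK G) - 1

/-- The shift operator `S`, with `S_{ab} = δ_{a,b⁻¹}`. -/
def shiftS (G : SimpleGraph V) : Matrix (GArc G) (GArc G) ℂ :=
  fun a b => if a = arcInv b then 1 else 0

/-- The perturbed shift `S_θ`, with `(S_θ)_{ab} = e^{iθ(b)} δ_{a,b⁻¹}`. -/
def shiftStheta (G : SimpleGraph V) (θ : GArc G → ℝ) : Matrix (GArc G) (GArc G) ℂ :=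
  fun a b => if a = arcInv b then Complex.exp ((θ b : ℂ) * Complex.I) else 0

/-- The Grover transfer matrix `U = SC`. -/
def groverU (G : SimpleGraph V) [DecidableRel G.Adj] : Matrix (GArc G) (GArc G) ℂ :=
  shiftS G * coinC G

/-- The transfer matrix `U_θ = S_θ C`. -/
def transferU (G : SimpleGraph V) [DecidableRel G.Adj] (θ : GArc G → ℝ) :
    Matrix (GArc G) (GArc G) ℂ :=
  shiftStheta G θ * coinC G

/-- The diagonal matrix `D_θ` with `(D_θ)_{ab} = e^{iθ(a)} δ_{ab}`. -/
def Dtheta (G : SimpleGraph V) (θ : GArc G → ℝ) : Matrix (GArc G) (GArc G) ℂ :=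
  Matrix.diagonal fun a => Complex.exp ((θ a : ℂ) * Complex.I)

/-- The positive support of a (real-valued) complex matrix. -/
def suppPos {α : Type} (M : Matrix α α ℂ) : Matrix α α ℂ :=
  fun a b => if 0 < (M a b).re then 1 else 0

/-- The negative support of a (real-valued) complex matrix. -/
def suppNeg {α : Type} (M : Matrix α α ℂ) : Matrix α α ℂ :=
  fun a b => if (M a b).re < 0 then 1 else 0

/-- The positive support of a real matrix. -/
def suppPosR {α : Type} (M : Matrix α α ℝ) : Matrix α α ℝ :=
  fun a b => if 0 < M a b then 1 else 0

/-- The negative support of a real matrix. -/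
def suppNegR {α : Type} (M : Matrix α α ℝ) : Matrix α α ℝ :=
  fun a b => if M a b < 0 then 1 else 0

/-- A digraph on `V`: an irreflexive (Boolean) arc relation. -/
structure Dgraph (V : Type) where
  adj : V → V → Bool
  loopless : ∀ v, adj v v = false

namespace Dgraph

/-- `(x,y)` is an arc of `D`. -/
def Adj (D : Dgraph V) (x y : V) : Prop := D.adj x y = true

instance (D : Dgraph V) : DecidableRel D.Adj := fun _ _ => by unfold Adj; infer_instance

/-- The underlying (undirected simple) graph `G^±`. -/
def underlying (D : Dgraph V) : SimpleGraph V where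
  Adj x y := D.Adj x y ∨ D.Adj y x
  symm := ⟨fun _ _ h => h.symm⟩
  loopless := ⟨fun v h => by
    rcases h with h | h <;> exact absurd h (by simp [Adj, D.loopless v])⟩

instance (D : Dgraph V) : DecidableRel D.underlying.Adj :=
  fun x y => inferInstanceAs (Decidable (D.Adj x y ∨ D.Adj y x))

/-- The transpose digraph `G⁻¹`. -/
def transpose (D : Dgraph V) : Dgraph V where
  adj x y := D.adj y x
  loopless := D.loopless

end Dgraph

/-- The `η`-function of a digraph `D`: `η` on `A∖A⁻¹`, `-η` on `A⁻¹∖A`, `0` on digons. -/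
def etaFun (D : Dgraph V) (η : ℝ) (a : GArc D.underlying) : ℝ :=
  if D.Adj (arcO a) (arcT a) then (if D.Adj (arcT a) (arcO a) then 0 else η) else -η

/-- The `η`-Hermitian adjacency matrix `H_η`. -/
def Heta (D : Dgraph V) (η : ℝ) : Matrix V V ℂ :=
  fun x y =>
    if D.Adj x y then (if D.Adj y x then 1 else Complex.exp ((η : ℂ) * Complex.I))
    else if D.Adj y x then Complex.exp (-(η : ℂ) * Complex.I) else 0

/-- The diagonal matrix `D^{-1/2}` of inverse square roots of degrees. -/
def degHalfInv (D : Dgraph V) : Matrix V V ℂ :=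
  Matrix.diagonal fun x => ((1 / Real.sqrt (D.underlying.degree x) : ℝ) : ℂ)

/-- The normalized `η`-Hermitian adjacency matrix `H̃_η = D^{-1/2} H_η D^{-1/2}`. -/
def normHeta (D : Dgraph V) (η : ℝ) : Matrix V V ℂ :=
  degHalfInv D * Heta D η * degHalfInv D

/-- The multiset of preimages of `μ` under `φ(z) = (z + z⁻¹)/2` on the unit circle:
the distinct roots of `z² - 2μz + 1`. -/
def phiInv (μ : ℂ) : Multiset ℂ :=
  ((X ^ 2 - Polynomial.C (2 * μ) * X + 1 : Polynomial ℂ).roots).dedup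

/-- A closed path in a graph: a nonempty chain of arcs returning to its start. -/
structure ClosedPath (G : SimpleGraph V) where
  arcs : List (GArc G)
  ne : arcs ≠ []
  chain : arcs.Chain' fun a b => arcT a = arcO b
  closed : arcT (arcs.getLast ne) = arcO (arcs.head ne)

/-- `ℐ(c) = Σ_j θ(a_j)` for a closed path `c`. -/
def pathSum {G : SimpleGraph V} (θ : GArc G → ℝ) (c : ClosedPath G) : ℝ :=
  (c.arcs.map θ).sum

/-- `x ∈ 2πℤ`. -/
def in2piZ (x : ℝ) : Prop := ∃ m : ℤ, x = 2 * Real.pi * m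

/-- `x ∈ 2π(ℤ + 1/2)`. -/
def in2piZhalf (x : ℝ) : Prop := ∃ m : ℤ, x = 2 * Real.pi * (m + 1 / 2)

/-- The matrix `F_t` with `(F_t)_{x,a} = δ_{x,t(a)}`. -/
def Ft (G : SimpleGraph V) : Matrix V (GArc G) ℂ := fun x a => if x = arcT a then 1 else 0

/-- The matrix `F_o` with `(F_o)_{x,a} = δ_{x,o(a)}`. -/
def Fo (G : SimpleGraph V) : Matrix V (GArc G) ℂ := fun x a => if x = arcO a then 1 else 0

/-- The 0/1 matrix `R` with `R_{ab} = 1` iff `m(a,b) = (t(b),o(a)) ∈ A(G) ∩ A(G)⁻¹`. -/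
def Rmat (D : Dgraph V) : Matrix (GArc D.underlying) (GArc D.underlying) ℂ :=
  fun a b => if D.Adj (arcT b) (arcO a) ∧ D.Adj (arcO a) (arcT b) then 1 else 0

/-- `U_θ^{(n,+)}`: the 0/1 matrix with `(a,b)` entry `1` iff `Re(D_θ U_θⁿ)_{ab} > 0`. -/
def suppPow (D : Dgraph V) (η : ℝ) (n : ℕ) :
    Matrix (GArc D.underlying) (GArc D.underlying) ℂ :=
  suppPos (Dtheta D.underlying (etaFun D η) * transferU D.underlying (etaFun D η) ^ n)

/-- `U_θ^{(n,−)}`: the 0/1 matrix with `(a,b)` entry `1` iff `Re(D_θ U_θⁿ)_{ab} < 0`. -/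
def suppPowNeg (D : Dgraph V) (η : ℝ) (n : ℕ) :
    Matrix (GArc D.underlying) (GArc D.underlying) ℂ :=
  suppNeg (Dtheta D.underlying (etaFun D η) * transferU D.underlying (etaFun D η) ^ n)

/-- The number of digons of a digraph. -/
def digonCount (D : Dgraph V) : ℕ :=
  (Finset.univ.filter fun p : V × V => D.Adj p.1 p.2 ∧ D.Adj p.2 p.1).card / 2

/-- The digraph `Y_{a,n-a}`: two complete (digon) blocks `[a]` and `[n]∖[a]`, with all
arcs from the first block to the second. -/
def Ydigraph (n a : ℕ) : Dgraph (Fin n) where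
  adj x y := decide ((x ≠ y) ∧
    ((x.val < a ∧ y.val < a) ∨ (a ≤ x.val ∧ a ≤ y.val) ∨ (x.val < a ∧ a ≤ y.val)))
  loopless := fun v => by simp

/-- The shift operator as a real matrix. -/
def shiftSR (G : SimpleGraph V) : Matrix (GArc G) (GArc G) ℝ :=
  fun a b => if a = arcInv b then 1 else 0

/-- The Grover transfer matrix as a real matrix, given by its entries
`U_{ab} = (2/deg t(b)) δ_{t(b),o(a)} − δ_{a⁻¹,b}`. -/
def groverEnt (G : SimpleGraph V) [DecidableRel G.Adj] : Matrix (GArc G) (GArc G) ℝ :=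
  fun a b => 2 / (G.degree (arcT b)) * (if arcT b = arcO a then 1 else 0)
    - (if arcInv a = b then 1 else 0)

/-!
On a `k`-regular graph `U = (2/k) P - S`, where `P_{ab} = [t(b) = o(a)]` and `S` is the
arc-reversal involution. Hence `U² = (2/k)² P² - (2/k) (PS + SP) + 1`, and the entries of `P²`,
`PS`, `SP` are `[t(b) ∼ o(a)]`, `[o(a) = o(b)]`, `[t(a) = t(b)]`. Since `0 < 2/k < 1` for `k ≥ 3`,
the sign of `(U²)_{ab}` is read off from which of these indicators are nonzero.
-/

/-- `arcSucc G a b = 1` iff the arc `a` can follow the arc `b` in a walk. -/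
def arcSucc (G : SimpleGraph V) : Matrix (GArc G) (GArc G) ℝ :=
  fun a b => if arcT b = arcO a then 1 else 0

lemma GArc.ext {V : Type} {G : SimpleGraph V} {a b : GArc G} (ho : arcO a = arcO b)
    (ht : arcT a = arcT b) : a = b :=
  Subtype.ext (Prod.ext ho ht)

lemma GArc.adj_arcT_arcO {V : Type} {G : SimpleGraph V} (a : GArc G) : G.Adj (arcT a) (arcO a) :=
  a.2.symm

@[simp]
lemma arcInv_arcInv {V : Type} {G : SimpleGraph V} (a : GArc G) : arcInv (arcInv a) = a := rfl

lemma arcInv_inj {V : Type} {G : SimpleGraph V} {a b : GArc G} : arcInv a = arcInv b ↔ a = b :=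
  (Function.LeftInverse.injective arcInv_arcInv).eq_iff

@[simp]
lemma arcO_arcInv {V : Type} {G : SimpleGraph V} (a : GArc G) : arcO (arcInv a) = arcT a := rfl

@[simp]
lemma arcT_arcInv {V : Type} {G : SimpleGraph V} (a : GArc G) : arcT (arcInv a) = arcO a := rfl

section GroverSquare

variable {G : SimpleGraph V} [DecidableRel G.Adj]

lemma shiftSR_mul_apply (M : Matrix (GArc G) (GArc G) ℝ) (a b : GArc G) :
    (shiftSR G * M) a b = M (arcInv a) b := by
  rw [mul_apply, Finset.sum_eq_single (arcInv a)]
  · simp [shiftSR]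
  · intro c _ hc
    simp [shiftSR, show a ≠ arcInv c from fun h => hc (h ▸ rfl)]
  · simp

lemma mul_shiftSR_apply (M : Matrix (GArc G) (GArc G) ℝ) (a b : GArc G) :
    (M * shiftSR G) a b = M a (arcInv b) := by
  rw [mul_apply, Finset.sum_eq_single (arcInv b)]
  · simp [shiftSR]
  · intro c _ hc
    simp [shiftSR, hc]
  · simp

lemma shiftSR_mul_shiftSR : shiftSR G * shiftSR G = 1 := by
  ext a b
  rw [shiftSR_mul_apply, shiftSR, one_apply]
  exact if_congr arcInv_inj rfl rfl

/-- The only arc from `t(b)` to `o(a)` is `(t(b), o(a))`. -/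
lemma arcSucc_mul_arcSucc_apply (a b : GArc G) :
    (arcSucc G * arcSucc G) a b = if G.Adj (arcT b) (arcO a) then 1 else 0 := by
  rw [mul_apply]
  split_ifs with hadj
  · rw [Finset.sum_eq_single ⟨(arcT b, arcO a), hadj⟩]
    · simp [arcSucc, arcO, arcT]
    · intro c _ hc
      simp only [arcSucc, mul_ite, mul_one, mul_zero, ite_eq_right_iff, one_ne_zero, imp_false]
      exact fun hb ha => hc (GArc.ext hb.symm ha)
    · simp
  · refine Finset.sum_eq_zero fun c _ => ?_
    simp only [arcSucc, mul_ite, mul_one, mul_zero, ite_eq_right_iff, one_ne_zero, imp_false]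
    rintro hb ha
    exact hadj (ha ▸ hb ▸ c.2)

lemma groverEnt_eq_of_regular {k : ℕ} (hreg : ∀ v, G.degree v = k) :
    groverEnt G = (2 / k : ℝ) • arcSucc G - shiftSR G := by
  ext a b
  simp only [groverEnt, hreg, arcSucc, shiftSR, Matrix.sub_apply, Matrix.smul_apply, smul_eq_mul]
  exact congrArg _ (if_congr ⟨fun h => h ▸ rfl, fun h => h ▸ rfl⟩ rfl rfl)

lemma groverEnt_mul_self_apply_of_regular {k : ℕ} (hreg : ∀ v, G.degree v = k) (a b : GArc G) :
    (groverEnt G * groverEnt G) a b =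
      (2 / k) ^ 2 * (if G.Adj (arcT b) (arcO a) then 1 else 0)
        - 2 / k * ((if arcO a = arcO b then 1 else 0) + (if arcT a = arcT b then 1 else 0))
        + if a = b then 1 else 0 := by
  have hsq : groverEnt G * groverEnt G = ((2 / k) ^ 2 : ℝ) • (arcSucc G * arcSucc G)
      - (2 / k : ℝ) • (arcSucc G * shiftSR G + shiftSR G * arcSucc G) + 1 := by
    rw [groverEnt_eq_of_regular hreg, sub_mul, mul_sub, mul_sub, shiftSR_mul_shiftSR,
      smul_mul_smul_comm, mul_smul_comm, smul_mul_assoc, smul_add]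
    ring_nf
    abel
  rw [hsq]
  simp only [Matrix.add_apply, Matrix.sub_apply, Matrix.smul_apply, smul_eq_mul, one_apply,
    arcSucc_mul_arcSucc_apply, mul_shiftSR_apply, shiftSR_mul_apply, arcSucc, arcO_arcInv,
    arcT_arcInv]
  simp only [eq_comm]

end GroverSquare

theorem stmt12_general {V : Type} [Fintype V] [DecidableEq V] (k : ℕ) (hk : 3 ≤ k)
    (G : SimpleGraph V) [DecidableRel G.Adj]
    (hreg : ∀ v, G.degree v = k) (a b : GArc G) :
    (0 < (groverEnt G * groverEnt G) a b ↔
      a = b ∨ (G.Adj (arcT b) (arcO a) ∧ a ≠ b ∧ arcO a ≠ arcO b ∧ arcT a ≠ arcT b)) ∧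
    ((groverEnt G * groverEnt G) a b < 0 ↔
      a ≠ b ∧ (arcO a = arcO b ∨ arcT a = arcT b)) := by
  rw [groverEnt_mul_self_apply_of_regular hreg]
  have hk' : (3 : ℝ) ≤ k := by exact_mod_cast hk
  have hx₀ : 0 < (2 / k : ℝ) := by positivity
  have hx₁ : (2 / k : ℝ) < 1 := by rw [div_lt_one] <;> linarith
  generalize (2 / k : ℝ) = x at hx₀ hx₁
  by_cases hab : a = b
  · subst hab
    rw [if_pos a.adj_arcT_arcO, if_pos rfl, if_pos rfl, if_pos rfl]
    have hpos : 0 < x ^ 2 * 1 - x * (1 + 1) + 1 := by nlinarith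
    exact ⟨iff_of_true hpos (.inl rfl), iff_of_false hpos.not_gt (by tauto)⟩
  by_cases ho : arcO a = arcO b
  · have ht : arcT a ≠ arcT b := fun ht => hab (GArc.ext ho ht)
    rw [if_pos (ho ▸ b.adj_arcT_arcO), if_pos ho, if_neg ht, if_neg hab]
    have hneg : x ^ 2 * 1 - x * (1 + 0) + 0 < 0 := by nlinarith
    exact ⟨iff_of_false hneg.not_gt (by tauto), iff_of_true hneg ⟨hab, .inl ho⟩⟩
  by_cases ht : arcT a = arcT b
  · rw [if_pos (ht ▸ a.adj_arcT_arcO), if_neg ho, if_pos ht, if_neg hab]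
    have hneg : x ^ 2 * 1 - x * (0 + 1) + 0 < 0 := by nlinarith
    exact ⟨iff_of_false hneg.not_gt (by tauto), iff_of_true hneg ⟨hab, .inr ht⟩⟩
  rw [if_neg ho, if_neg ht, if_neg hab]
  refine ⟨?_, iff_of_false ?_ (by tauto)⟩
  · split_ifs with hadj
    · exact iff_of_true (by nlinarith) (.inr ⟨hadj, hab, ho, ht⟩)
    · exact iff_of_false (by simp) (by tauto)
  · split_ifs <;> nlinarith

/-- For a `k`-regular connected graph with `k ≥ 3`: `(U²)_{ab} > 0` iff `a = b` or
(`t(b) ∼ o(a)`, `a ≠ b`, `o(a) ≠ o(b)`, `t(a) ≠ t(b)`); and `(U²)_{ab} < 0` iff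
`a ≠ b` and (`o(a) = o(b)` or `t(a) = t(b)`). -/
theorem stmt12 {V : Type} [Fintype V] [DecidableEq V] (k : ℕ) (hk : 3 ≤ k)
    (G : SimpleGraph V) [DecidableRel G.Adj] (hconn : G.Connected)
    (hreg : ∀ v, G.degree v = k) (a b : GArc G) :
    (0 < (groverEnt G * groverEnt G) a b ↔
      a = b ∨ (G.Adj (arcT b) (arcO a) ∧ a ≠ b ∧ arcO a ≠ arcO b ∧ arcT a ≠ arcT b)) ∧
    ((groverEnt G * groverEnt G) a b < 0 ↔
      a ≠ b ∧ (arcO a = arcO b ∨ arcT a = arcT b)) :=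
  stmt12_general k hk G hreg a b
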